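/- arXiv:1311.1902 — 2 statements merged into one kernel-verified Lean document; each statement's English description precedes it below -/
import Mathlib

section
/- (Lions' Representation Theorem) Let 𝓗 be a Hilbert space and 𝓥 a pre-Hilbert space continuously embedded in 𝓗. Let E : 𝓗 × 𝓥 → 𝕂 be sesquilinear such that (1) for each w ∈ 𝓥 the map u ↦ E(u,w) is a continuous linear functional on 𝓗, and (2) |E(w,w)| ≥ α‖w‖²_𝓥 for all w ∈ 𝓥 and some α > 0. Then for every continuous (anti)linear functional L on 𝓥 there exists u ∈ 𝓗 with L(w) = E(u,w) for all w ∈ 𝓥. -/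
open MeasureTheory Set Function

/-!
Represent `E(·, w)` by Riesz as `⟪T w, ·⟫` with `T : 𝓥 → 𝓗` linear. Coercivity gives
`α ‖w‖² ≤ |⟪T w, i w⟫| ≤ ‖T w‖ ‖i‖ ‖w‖`, so `T` is bounded below and `w ↦ conj (L w)` is a
bounded functional of `T w` on the range of `T`. Extending it to `𝓗` by Hahn–Banach and
representing the extension by Riesz as `⟪u, ·⟫` gives `E(u, w) = ⟪T w, u⟫ = L w`.
-/

open scoped InnerProductSpace

section

variable {𝕜 : Type*} [RCLike 𝕜]

theorem exists_strongDual_comp_eq_of_norm_le {V F : Type*} [AddCommGroup V] [Module 𝕜 V]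
    [NormedAddCommGroup F] [NormedSpace 𝕜 F] (T : V →ₗ[𝕜] F) (f : V →ₗ[𝕜] 𝕜) (K : ℝ)
    (hf : ∀ v, ‖f v‖ ≤ K * ‖T v‖) : ∃ g : StrongDual 𝕜 F, ∀ v, g (T v) = f v := by
  have hker : LinearMap.ker T ≤ LinearMap.ker f := fun v hv => by
    simpa [LinearMap.mem_ker.mp hv] using hf v
  set g₀ : LinearMap.range T →ₗ[𝕜] 𝕜 :=
    (LinearMap.ker T).liftQ f hker ∘ₗ T.quotKerEquivRange.symm.toLinearMap
  have hg₀ : ∀ v, g₀ ⟨T v, LinearMap.mem_range_self T v⟩ = f v := fun v => by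
    simp [g₀, LinearMap.quotKerEquivRange_symm_apply_image]
  have hg₀_bound : ∀ x, ‖g₀ x‖ ≤ K * ‖x‖ := by
    rintro ⟨_, v, rfl⟩
    rw [hg₀]
    exact hf v
  obtain ⟨g, hg, -⟩ := exists_extension_norm_eq _ (g₀.mkContinuous K hg₀_bound)
  exact ⟨g, fun v => (hg ⟨T v, _⟩).trans (hg₀ v)⟩

section Hilbert

variable {H : Type*} [NormedAddCommGroup H] [InnerProductSpace 𝕜 H] [CompleteSpace H]

theorem exists_inner_eq_of_norm_le {V : Type*} [AddCommGroup V] [Module 𝕜 V]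
    (T : V →ₗ[𝕜] H) (f : V →ₗ[𝕜] 𝕜) (K : ℝ) (hf : ∀ v, ‖f v‖ ≤ K * ‖T v‖) :
    ∃ u : H, ∀ v, ⟪u, T v⟫_𝕜 = f v := by
  obtain ⟨g, hg⟩ := exists_strongDual_comp_eq_of_norm_le T f K hf
  exact ⟨(InnerProductSpace.toDual 𝕜 H).symm g, fun v =>
    InnerProductSpace.toDual_symm_apply.trans (hg v)⟩

theorem exists_linearMap_inner_eq {V : Type*} [AddCommGroup V] [Module 𝕜 V] (E : H → V → 𝕜)
    (hE_lin : ∀ w : V, ∃ φ : H →L[𝕜] 𝕜, ∀ u : H, E u w = φ u)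
    (hE_add : ∀ u : H, ∀ w w' : V, E u (w + w') = E u w + E u w')
    (hE_smul : ∀ u : H, ∀ (c : 𝕜) (w : V), E u (c • w) = starRingEnd 𝕜 c * E u w) :
    ∃ T : V →ₗ[𝕜] H, ∀ w u, ⟪T w, u⟫_𝕜 = E u w := by
  choose φ hφ using hE_lin
  let T : V → H := fun w => (InnerProductSpace.toDual 𝕜 H).symm (φ w)
  have hT : ∀ w u, ⟪T w, u⟫_𝕜 = E u w := fun w u =>
    InnerProductSpace.toDual_symm_apply.trans (hφ w u).symm
  refine ⟨{ toFun := T, map_add' := ?_, map_smul' := ?_ }, hT⟩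
  · refine fun w w' => ext_inner_right 𝕜 fun u => ?_
    rw [inner_add_left, hT, hT, hT, hE_add]
  · refine fun c w => ext_inner_right 𝕜 fun u => ?_
    rw [RingHom.id_apply, inner_smul_left, hT, hT, hE_smul]

end Hilbert

theorem mul_norm_le_opNorm_mul_norm_of_le_norm_inner {V H : Type*} [NormedAddCommGroup V]
    [NormedSpace 𝕜 V] [NormedAddCommGroup H] [InnerProductSpace 𝕜 H] (i : V →L[𝕜] H)
    {α : ℝ} {w : V} {x : H} (h : α * ‖w‖ ^ 2 ≤ ‖⟪x, i w⟫_𝕜‖) : α * ‖w‖ ≤ ‖i‖ * ‖x‖ := by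
  rcases eq_or_ne w 0 with rfl | hw
  · simp only [norm_zero, mul_zero]
    positivity
  refine le_of_mul_le_mul_right ?_ (norm_pos_iff.mpr hw)
  calc α * ‖w‖ * ‖w‖ = α * ‖w‖ ^ 2 := by ring
    _ ≤ ‖x‖ * ‖i w‖ := h.trans (norm_inner_le_norm _ _)
    _ ≤ ‖x‖ * (‖i‖ * ‖w‖) := by gcongr; exact i.le_opNorm w
    _ = ‖i‖ * ‖x‖ * ‖w‖ := by ring

end

theorem stmt_5_general {𝕜 𝓗 𝓥 : Type*} [RCLike 𝕜]
    [NormedAddCommGroup 𝓗] [InnerProductSpace 𝕜 𝓗] [CompleteSpace 𝓗]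
    [NormedAddCommGroup 𝓥] [InnerProductSpace 𝕜 𝓥]
    (i : 𝓥 →L[𝕜] 𝓗)
    (E : 𝓗 → 𝓥 → 𝕜) (α : ℝ) (hα : 0 < α)
    (hE_lin : ∀ w : 𝓥, ∃ φ : 𝓗 →L[𝕜] 𝕜, ∀ u : 𝓗, E u w = φ u)
    (hE_add : ∀ u : 𝓗, ∀ w w' : 𝓥, E u (w + w') = E u w + E u w')
    (hE_smul : ∀ u : 𝓗, ∀ (c : 𝕜) (w : 𝓥), E u (c • w) = starRingEnd 𝕜 c * E u w)
    (hE_coercive : ∀ w : 𝓥, α * ‖w‖ ^ 2 ≤ ‖E (i w) w‖)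
    (L : 𝓥 → 𝕜) (C : ℝ)
    (hL_add : ∀ w w' : 𝓥, L (w + w') = L w + L w')
    (hL_smul : ∀ (c : 𝕜) (w : 𝓥), L (c • w) = starRingEnd 𝕜 c * L w)
    (hL_bdd : ∀ w : 𝓥, ‖L w‖ ≤ C * ‖w‖) :
    ∃ u : 𝓗, ∀ w : 𝓥, L w = E u w := by
  obtain ⟨T, hT⟩ := exists_linearMap_inner_eq E hE_lin hE_add hE_smul
  have hT_below (w : 𝓥) : α * ‖w‖ ≤ ‖i‖ * ‖T w‖ :=
    mul_norm_le_opNorm_mul_norm_of_le_norm_inner i (by rw [hT]; exact hE_coercive w)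
  let conjL : 𝓥 →ₗ[𝕜] 𝕜 :=
    { toFun := fun w => starRingEnd 𝕜 (L w)
      map_add' := by simp [hL_add]
      map_smul' := by simp [hL_smul, mul_comm] }
  have hconjL (w : 𝓥) : ‖conjL w‖ ≤ |C| * ‖i‖ / α * ‖T w‖ := calc
    ‖conjL w‖ = ‖L w‖ := RCLike.norm_conj _
    _ ≤ |C| * ‖w‖ := (hL_bdd w).trans (by gcongr; exact le_abs_self C)
    _ ≤ |C| * (‖i‖ * ‖T w‖ / α) := by gcongr; rw [le_div_iff₀ hα, mul_comm]; exact hT_below w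
    _ = |C| * ‖i‖ / α * ‖T w‖ := by ring
  obtain ⟨u, hu⟩ := exists_inner_eq_of_norm_le T conjL _ hconjL
  refine ⟨u, fun w => ?_⟩
  rw [← hT, ← inner_conj_symm, hu]
  simp [conjL]

/-- Lions' Representation Theorem: Let `𝓗` be a Hilbert space and `𝓥` a
pre-Hilbert space continuously embedded in `𝓗` via `i`. Let `E : 𝓗 × 𝓥 → 𝕜` be
sesquilinear (linear and continuous in the first variable, antilinear in the second)
with `|E(w,w)| ≥ α‖w‖²_𝓥` for all `w ∈ 𝓥`. Then every continuous antilinear functional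
`L` on `𝓥` is represented: there is `u ∈ 𝓗` with `L w = E(u, w)` for all `w ∈ 𝓥`. -/
theorem stmt_5 {𝕜 𝓗 𝓥 : Type*} [RCLike 𝕜]
    [NormedAddCommGroup 𝓗] [InnerProductSpace 𝕜 𝓗] [CompleteSpace 𝓗]
    [NormedAddCommGroup 𝓥] [InnerProductSpace 𝕜 𝓥]
    (i : 𝓥 →L[𝕜] 𝓗) (hi_inj : Injective i)
    (E : 𝓗 → 𝓥 → 𝕜) (α : ℝ) (hα : 0 < α)
    (hE_lin : ∀ w : 𝓥, ∃ φ : 𝓗 →L[𝕜] 𝕜, ∀ u : 𝓗, E u w = φ u)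
    (hE_add : ∀ u : 𝓗, ∀ w w' : 𝓥, E u (w + w') = E u w + E u w')
    (hE_smul : ∀ u : 𝓗, ∀ (c : 𝕜) (w : 𝓥), E u (c • w) = starRingEnd 𝕜 c * E u w)
    (hE_coercive : ∀ w : 𝓥, α * ‖w‖ ^ 2 ≤ ‖E (i w) w‖)
    (L : 𝓥 → 𝕜) (C : ℝ)
    (hL_add : ∀ w w' : 𝓥, L (w + w') = L w + L w')
    (hL_smul : ∀ (c : 𝕜) (w : 𝓥), L (c • w) = starRingEnd 𝕜 c * L w)
    (hL_bdd : ∀ w : 𝓥, ‖L w‖ ≤ C * ‖w‖) :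
    ∃ u : 𝓗, ∀ w : 𝓥, L w = E u w :=
  stmt_5_general i E α hα hE_lin hE_add hE_smul hE_coercive L C hL_add hL_smul hL_bdd
end

section
/- Let a : [0,T] × V × V → 𝕂 be V-bounded, Lipschitz in t, and additionally symmetric (a(t,u,v) = conj(a(t,v,u))). Then for u ∈ H¹(0,T;V), the derivative of t ↦ a(t,u(t),u(t)) equals 2 Re a(t,u(t),u̇(t)) + ȧ(t,u(t),u(t)) for a.e. t, where ȧ is the a.e. time-derivative form. -/
/-!
Write `a(s, u s, u s)` as `a(t, u s, u s) + (a(s, u t, u t) - a(t, u t, u t))` plus the remainder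
`(a s - a t)(u s, u s) - (a s - a t)(u t, u t)`. The first term is differentiated by the product
rule for the bounded form `a t`, and the Lipschitz bound makes the remainder
`O(|s - t| * ‖u s - u t‖) = o(s - t)`. The middle term needs `ȧ` to be the derivative at the
moving point `u t`, whereas the hypothesis gives it only for a.e. `t` with `(x, y)` fixed. The
Lipschitz bound makes the difference quotients of `a` an equicontinuous family of forms, so
the set of pairs at which the derivative equals `ȧ t` is closed; since `u` is continuous,
`u '' [0, T]` is compact, hence separable, and a countable dense subset suffices. Symmetry
turns `a(t, u, u̇) + a(t, u̇, u)` into `2 Re a(t, u, u̇)`.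
-/

open MeasureTheory Set Filter Topology

section Primitive

variable {E : Type*} [NormedAddCommGroup E] [NormedSpace ℝ E] {u u' : ℝ → E} {a b : ℝ}

theorem continuousOn_of_eq_add_integral (hu' : IntervalIntegrable u' volume a b)
    (hu : ∀ t ∈ Icc a b, u t = u a + ∫ s in a..t, u' s) : ContinuousOn u (Icc a b) :=
  ((continuousOn_const.add (intervalIntegral.continuousOn_primitive_interval' hu'
    left_mem_uIcc)).mono Icc_subset_uIcc).congr hu

variable [CompleteSpace E]

theorem ae_hasDerivAt_of_eq_add_integral (hu' : IntervalIntegrable u' volume a b)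
    (hu : ∀ t ∈ Icc a b, u t = u a + ∫ s in a..t, u' s) :
    ∀ᵐ t ∂volume.restrict (Ioo a b), HasDerivAt u (u' t) t := by
  rw [ae_restrict_iff' measurableSet_Ioo]
  filter_upwards [hu'.ae_hasDerivAt_integral] with t ht htab
  have hprim := ht (Icc_subset_uIcc (Ioo_subset_Icc_self htab)) a left_mem_uIcc
  refine (hprim.const_add (u a)).congr_of_eventuallyEq ?_
  filter_upwards [Icc_mem_nhds htab.1 htab.2] with s hs using hu s hs

end Primitive

namespace ContinuousLinearMap

variable {𝕜 E F : Type*} [RCLike 𝕜] [NormedAddCommGroup E] [NormedSpace 𝕜 E]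
  [NormedAddCommGroup F] [NormedSpace 𝕜 F]

theorem norm_apply_sub_apply_le {B : E →L[𝕜] F →L⋆[𝕜] 𝕜} {C : ℝ}
    (hB : ∀ x y, ‖B x y‖ ≤ C * ‖x‖ * ‖y‖) (p q : E × F) :
    ‖B q.1 q.2 - B p.1 p.2‖ ≤ C * (‖q.1 - p.1‖ * ‖q.2‖ + ‖p.1‖ * ‖q.2 - p.2‖) := by
  have hsplit : B q.1 q.2 - B p.1 p.2 = B (q.1 - p.1) q.2 + B p.1 (q.2 - p.2) := by
    simp only [map_sub, sub_apply]
    ring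
  calc ‖B q.1 q.2 - B p.1 p.2‖ ≤ ‖B (q.1 - p.1) q.2‖ + ‖B p.1 (q.2 - p.2)‖ :=
        hsplit ▸ norm_add_le _ _
    _ ≤ C * ‖q.1 - p.1‖ * ‖q.2‖ + C * ‖p.1‖ * ‖q.2 - p.2‖ := add_le_add (hB _ _) (hB _ _)
    _ = _ := by ring

theorem equicontinuous_apply_of_norm_le {ι : Type*} {B : ι → E →L[𝕜] F →L⋆[𝕜] 𝕜} {C : ℝ}
    (hB : ∀ i x y, ‖B i x y‖ ≤ C * ‖x‖ * ‖y‖) :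
    Equicontinuous fun i (p : E × F) => B i p.1 p.2 := by
  intro p
  refine Metric.equicontinuousAt_of_continuity_modulus
    (fun q => C * (‖q.1 - p.1‖ * ‖q.2‖ + ‖p.1‖ * ‖q.2 - p.2‖)) ?_ _
    (Eventually.of_forall fun q i => by
      rw [dist_comm, dist_eq_norm]; exact norm_apply_sub_apply_le (hB i) p q)
  have hcont : Continuous fun q : E × F => C * (‖q.1 - p.1‖ * ‖q.2‖ + ‖p.1‖ * ‖q.2 - p.2‖) := by
    fun_prop
  simpa using hcont.tendsto p

theorem continuous_apply₂ (B : E →L[𝕜] F →L⋆[𝕜] 𝕜) : Continuous fun p : E × F => B p.1 p.2 :=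
  (equicontinuous_apply_of_norm_le (B := fun _ : Unit => B) fun _ => B.le_opNorm₂).continuous ()

theorem isClosed_setOf_hasDerivAt_apply {a : ℝ → E →L[𝕜] F →L⋆[𝕜] 𝕜}
    {b : E →L[𝕜] F →L⋆[𝕜] 𝕜} {t L : ℝ}
    (hlip : ∀ᶠ s in 𝓝 t, ∀ x y, ‖a s x y - a t x y‖ ≤ L * |s - t| * ‖x‖ * ‖y‖) :
    IsClosed {p : E × F | HasDerivAt (fun s => a s p.1 p.2) (b p.1 p.2) t} := by
  set I := {s | ∀ x y, ‖a s x y - a t x y‖ ≤ L * |s - t| * ‖x‖ * ‖y‖}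
  let Q : I → E →L[𝕜] F →L⋆[𝕜] 𝕜 := fun s => ((s - t : ℝ)⁻¹ : 𝕜) • (a s - a t)
  have hslope (p : E × F) (s : I) : Q s p.1 p.2 = slope (fun s => a s p.1 p.2) t s := by
    simp [Q, slope_def_module, RCLike.real_smul_eq_coe_mul (K := 𝕜)]
  have hQ (s : I) (x : E) (y : F) : ‖Q s x y‖ ≤ |L| * ‖x‖ * ‖y‖ := by
    have hs := s.2 x y
    simp only [Q, smul_apply, sub_apply, norm_smul, norm_inv, RCLike.norm_ofReal]
    calc |(s : ℝ) - t|⁻¹ * ‖a s x y - a t x y‖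
        ≤ |(s : ℝ) - t|⁻¹ * (L * |s - t| * ‖x‖ * ‖y‖) := by gcongr
      _ ≤ |L| * ‖x‖ * ‖y‖ := by
        rcases eq_or_ne ((s : ℝ) - t) 0 with h | h
        · simp only [h, abs_zero, inv_zero, zero_mul]
          positivity
        · rw [show |(s : ℝ) - t|⁻¹ * (L * |s - t| * ‖x‖ * ‖y‖) = L * ‖x‖ * ‖y‖ by
            field_simp [abs_ne_zero.2 h]]
          gcongr
          exact le_abs_self L
  have hI : range ((↑) : I → ℝ) ∈ 𝓝[≠] t := by
    rw [Subtype.range_coe]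
    exact mem_nhdsWithin_of_mem_nhds hlip
  have hset : {p : E × F | HasDerivAt (fun s => a s p.1 p.2) (b p.1 p.2) t}
      = {p | Tendsto (fun s => Q s p.1 p.2) (comap (↑) (𝓝[≠] t)) (𝓝 (b p.1 p.2))} := by
    ext p
    simp only [hasDerivAt_iff_tendsto_slope, mem_ofPred_eq, hslope]
    exact (tendsto_comap'_iff hI).symm
  rw [hset]
  exact (equicontinuous_apply_of_norm_le hQ).isClosed_setOfPred_tendsto b.continuous_apply₂

theorem ae_hasDerivAt_apply_of_isSeparable {a a' : ℝ → E →L[𝕜] F →L⋆[𝕜] 𝕜} {μ : Measure ℝ}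
    {L : ℝ}
    (hlip : ∀ᵐ t ∂μ, ∀ᶠ s in 𝓝 t, ∀ x y, ‖a s x y - a t x y‖ ≤ L * |s - t| * ‖x‖ * ‖y‖)
    (hderiv : ∀ x y, ∀ᵐ t ∂μ, HasDerivAt (fun s => a s x y) (a' t x y) t)
    {S : Set (E × F)} (hS : TopologicalSpace.IsSeparable S) :
    ∀ᵐ t ∂μ, ∀ p ∈ S, HasDerivAt (fun s => a s p.1 p.2) (a' t p.1 p.2) t := by
  obtain ⟨D, hD, hSD⟩ := hS
  have hderivD : ∀ᵐ t ∂μ, ∀ p ∈ D, HasDerivAt (fun s => a s p.1 p.2) (a' t p.1 p.2) t :=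
    (ae_ball_iff hD).2 fun p _ => hderiv p.1 p.2
  filter_upwards [hlip, hderivD] with t hlipt hderivt p hp
  exact (isClosed_setOf_hasDerivAt_apply hlipt).closure_subset_iff.2 hderivt (hSD hp)

variable [NormedSpace ℝ E] [IsScalarTower ℝ 𝕜 E] [NormedSpace ℝ F] [IsScalarTower ℝ 𝕜 F]

theorem isBoundedBilinearMap_real (B : E →L[𝕜] F →L⋆[𝕜] 𝕜) :
    IsBoundedBilinearMap ℝ fun p : E × F => B p.1 p.2 where
  add_left x x' y := by simp
  smul_left r x y := by
    rw [RCLike.real_smul_eq_coe_smul (K := 𝕜) r x, _root_.map_smul, smul_apply,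
      RCLike.real_smul_eq_coe_smul (K := 𝕜)]
  add_right x y y' := by simp
  smul_right r x y := by
    rw [RCLike.real_smul_eq_coe_smul (K := 𝕜) r y, map_smulₛₗ, RCLike.conj_ofReal,
      RCLike.real_smul_eq_coe_smul (K := 𝕜)]
  bound := ⟨‖B‖ + 1, by positivity, fun x y =>
    (B.le_opNorm₂ x y).trans (by gcongr; linarith)⟩

theorem hasDerivAt_of_sesquilinear (B : E →L[𝕜] F →L⋆[𝕜] 𝕜) {u : ℝ → E} {v : ℝ → F}
    {u' : E} {v' : F} {t : ℝ} (hu : HasDerivAt u u' t) (hv : HasDerivAt v v' t) :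
    HasDerivAt (fun s => B (u s) (v s)) (B (u t) v' + B u' (v t)) t :=
  (B.isBoundedBilinearMap_real.hasFDerivAt (u t, v t)).comp_hasDerivAt
    (f := fun s => (u s, v s)) t (hu.prodMk hv)

theorem hasDerivAt_apply_of_lipschitz {a : ℝ → E →L[𝕜] F →L⋆[𝕜] 𝕜}
    {b : E →L[𝕜] F →L⋆[𝕜] 𝕜} {u : ℝ → E} {v : ℝ → F} {u' : E} {v' : F} {t L : ℝ}
    (hlip : ∀ᶠ s in 𝓝 t, ∀ x y, ‖a s x y - a t x y‖ ≤ L * |s - t| * ‖x‖ * ‖y‖)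
    (ha : HasDerivAt (fun s => a s (u t) (v t)) (b (u t) (v t)) t)
    (hu : HasDerivAt u u' t) (hv : HasDerivAt v v' t) :
    HasDerivAt (fun s => a s (u s) (v s)) (a t (u t) v' + a t u' (v t) + b (u t) (v t)) t := by
  let r s := (a s - a t) (u s) (v s) - (a s - a t) (u t) (v t)
  let g s := ‖u s - u t‖ * ‖v s‖ + ‖u t‖ * ‖v s - v t‖
  have hg : Tendsto g (𝓝 t) (𝓝 0) := by
    have hu_cont := hu.continuousAt
    have hv_cont := hv.continuousAt
    have hg_cont : ContinuousAt g t := by fun_prop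
    simpa [g] using hg_cont.tendsto
  have hr_bigO : r =O[𝓝 t] fun s => (s - t) * g s := by
    refine Asymptotics.IsBigO.of_bound L ?_
    filter_upwards [hlip] with s hs
    have hg_nonneg : 0 ≤ g s := by positivity
    calc ‖r s‖ ≤ L * |s - t| * g s :=
          norm_apply_sub_apply_le (fun x y => by simpa using hs x y) (u t, v t) (u s, v s)
      _ = L * ‖(s - t) * g s‖ := by
          rw [norm_mul, Real.norm_eq_abs, Real.norm_eq_abs, abs_of_nonneg hg_nonneg, mul_assoc]
  have hr : HasDerivAt r 0 t := by
    rw [hasDerivAt_iff_isLittleO]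
    simpa [r] using hr_bigO.trans_isLittleO
      ((Asymptotics.isBigO_refl (fun s => s - t) _).mul_isLittleO
        ((Asymptotics.isLittleO_one_iff ℝ).2 hg))
  have h := ((hr.add ha).add ((a t).hasDerivAt_of_sesquilinear hu hv)).sub_const
    (a t (u t) (v t))
  refine (h.congr_deriv (by ring)).congr_of_eventuallyEq (Eventually.of_forall fun s => ?_)
  simp only [r, Pi.add_apply, sub_apply]
  ring

end ContinuousLinearMap

theorem stmt_8_general {𝕜 V : Type*} [RCLike 𝕜]
    [NormedAddCommGroup V] [InnerProductSpace 𝕜 V] [CompleteSpace V]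
    [NormedSpace ℝ V] [IsScalarTower ℝ 𝕜 V]
    (T Mdot : ℝ) (hT : 0 < T)
    (a a' : ℝ → (V →L[𝕜] (V →SL[starRingEnd 𝕜] 𝕜)))
    (ha_symm : ∀ t ∈ Icc (0:ℝ) T, ∀ x y : V, a t x y = starRingEnd 𝕜 (a t y x))
    (ha_lip : ∀ s ∈ Icc (0:ℝ) T, ∀ t ∈ Icc (0:ℝ) T, ∀ x y : V,
      ‖a t x y - a s x y‖ ≤ Mdot * |t - s| * ‖x‖ * ‖y‖)
    (ha'_deriv : ∀ x y : V, ∀ᵐ t ∂(volume.restrict (Ioo 0 T)),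
      HasDerivAt (fun s => a s x y) (a' t x y) t)
    (u u' : ℝ → V)
    (hu'2 : MemLp u' 2 (volume.restrict (Ioc 0 T)))
    (hu : ∀ t ∈ Icc (0:ℝ) T, u t = u 0 + ∫ s in (0:ℝ)..t, u' s) :
    ∀ᵐ t ∂(volume.restrict (Ioo 0 T)),
      HasDerivAt (fun s => a s (u s) (u s))
        (((2 * RCLike.re (a t (u t) (u' t)) : ℝ) : 𝕜) + a' t (u t) (u t)) t := by
  have hu' : IntervalIntegrable u' volume 0 T :=
    (intervalIntegrable_iff_integrableOn_Ioc_of_le hT.le).2 (hu'2.integrable one_le_two)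
  have hcont := continuousOn_of_eq_add_integral hu' hu
  have hsep : TopologicalSpace.IsSeparable ((fun s => (u s, u s)) '' Icc 0 T) :=
    (isCompact_Icc.image_of_continuousOn (hcont.prodMk hcont)).isSeparable
  have hlip : ∀ᵐ t ∂volume.restrict (Ioo 0 T), ∀ᶠ s in 𝓝 t,
      ∀ x y : V, ‖a s x y - a t x y‖ ≤ Mdot * |s - t| * ‖x‖ * ‖y‖ := by
    filter_upwards [ae_restrict_mem measurableSet_Ioo] with t ht
    filter_upwards [Icc_mem_nhds ht.1 ht.2] with s hs
    exact ha_lip t (Ioo_subset_Icc_self ht) s hs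
  filter_upwards [ae_hasDerivAt_of_eq_add_integral hu' hu,
    ContinuousLinearMap.ae_hasDerivAt_apply_of_isSeparable hlip ha'_deriv hsep, hlip,
    ae_restrict_mem measurableSet_Ioo] with t hut hat hlipt ht
  have hdiag := hat (u t, u t) ⟨t, Ioo_subset_Icc_self ht, rfl⟩
  refine (ContinuousLinearMap.hasDerivAt_apply_of_lipschitz hlipt hdiag hut hut).congr_deriv ?_
  rw [ha_symm t (Ioo_subset_Icc_self ht) (u' t) (u t), RCLike.add_conj]
  push_cast
  ring

/-- Let `a` be a `V`-bounded (constant `M`), Lipschitz-in-`t`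
(constant `Mdot`) and symmetric non-autonomous sesquilinear form, with a.e.
time-derivative form `a'` (bounded by `Mdot`). Then for `u ∈ H¹(0,T;V)`, for a.e. `t`,
`(d/dt) a(t,u(t),u(t)) = 2 Re a(t,u(t),u̇(t)) + ȧ(t,u(t),u(t))`. -/
theorem stmt_8 {𝕜 V : Type*} [RCLike 𝕜]
    [NormedAddCommGroup V] [InnerProductSpace 𝕜 V] [CompleteSpace V]
    [NormedSpace ℝ V] [IsScalarTower ℝ 𝕜 V]
    (T M Mdot : ℝ) (hT : 0 < T)
    (a a' : ℝ → (V →L[𝕜] (V →SL[starRingEnd 𝕜] 𝕜)))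
    (ha_bdd : ∀ t ∈ Icc (0:ℝ) T, ∀ x y : V, ‖a t x y‖ ≤ M * ‖x‖ * ‖y‖)
    (ha_symm : ∀ t ∈ Icc (0:ℝ) T, ∀ x y : V, a t x y = starRingEnd 𝕜 (a t y x))
    (ha_lip : ∀ s ∈ Icc (0:ℝ) T, ∀ t ∈ Icc (0:ℝ) T, ∀ x y : V,
      ‖a t x y - a s x y‖ ≤ Mdot * |t - s| * ‖x‖ * ‖y‖)
    (ha'_bdd : ∀ t ∈ Icc (0:ℝ) T, ∀ x y : V, ‖a' t x y‖ ≤ Mdot * ‖x‖ * ‖y‖)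
    (ha'_deriv : ∀ x y : V, ∀ᵐ t ∂(volume.restrict (Ioo 0 T)),
      HasDerivAt (fun s => a s x y) (a' t x y) t)
    (u u' : ℝ → V)
    (hu2 : MemLp u 2 (volume.restrict (Ioc 0 T)))
    (hu'2 : MemLp u' 2 (volume.restrict (Ioc 0 T)))
    (hu : ∀ t ∈ Icc (0:ℝ) T, u t = u 0 + ∫ s in (0:ℝ)..t, u' s) :
    ∀ᵐ t ∂(volume.restrict (Ioo 0 T)),
      HasDerivAt (fun s => a s (u s) (u s))
        (((2 * RCLike.re (a t (u t) (u' t)) : ℝ) : 𝕜) + a' t (u t) (u t)) t :=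
  stmt_8_general T Mdot hT a a' ha_symm ha_lip ha'_deriv u u' hu'2 hu
end
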